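/- arXiv:2411.10844 — 4 statements merged into one kernel-verified Lean document; each statement's English description precedes it below -/
import Mathlib

section
/- For all natural numbers n, d, k with k ≤ d ≤ n, the identity ∑_{j=0}^{k} (-1)^{k-j} · C(d-j, k-j) · C(n, j) = C(n-d+k-1, k) holds. -/
private def Saux (n d k : ℕ) : ℤ :=
  ∑ j ∈ Finset.range (k + 1),
    (-1 : ℤ) ^ (k - j) * ((d - j).choose (k - j)) * (n.choose j)

private lemma Saux_base (n k : ℕ) (hk : k ≤ n) :
    Saux n n k = if k = 0 then 1 else 0 := by
  have h : Saux n n k = (-1)^k * ∑ j ∈ Finset.range (k+1), (-1:ℤ)^j * ((n.choose k : ℤ) * k.choose j) := by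
    rw [Finset.mul_sum, Saux]
    refine Finset.sum_congr rfl fun j hj => ?_
    have hjk : j ≤ k := Nat.lt_succ_iff.mp (Finset.mem_range.mp hj)
    have := Nat.choose_mul (n := n) hjk
    have h2 : ((n - j).choose (k - j) : ℤ) * (n.choose j) = (n.choose k : ℤ) * k.choose j := by
      rw [mul_comm]; exact_mod_cast this.symm
    have hkj : k - j + j = k := by omega
    have hev : (-1:ℤ)^(j+j) = 1 := Even.neg_one_pow ⟨j, rfl⟩
    have hsign : (-1:ℤ)^k * (-1)^j = (-1)^(k-j) := by
      conv_lhs => rw [← hkj]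
      rw [pow_add, mul_assoc, ← pow_add, hev, mul_one]
    rw [← hsign]
    linear_combination ((-1:ℤ)^k * (-1)^j) * h2
  rw [h]
  have := Int.alternating_sum_range_choose (n := k)
  rw [show ∑ j ∈ Finset.range (k+1), (-1:ℤ)^j * ((n.choose k : ℤ) * k.choose j)
      = (n.choose k : ℤ) * ∑ j ∈ Finset.range (k+1), (-1:ℤ)^j * (k.choose j) by
    rw [Finset.mul_sum]; refine Finset.sum_congr rfl fun j _ => by ring, this]
  rcases Nat.eq_zero_or_pos k with h0 | h0
  · simp [h0]
  · simp [Nat.pos_iff_ne_zero.mp h0]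

private lemma Saux_step (n d k : ℕ) (hk : k + 1 ≤ d) :
    Saux n d (k+1) = Saux n (d+1) (k+1) + Saux n d k := by
  unfold Saux
  rw [Finset.sum_range_succ (n := k+1), Finset.sum_range_succ (n := k+1)]
  simp only [Nat.sub_self, pow_zero, Nat.choose_zero_right]
  have key : ∑ j ∈ Finset.range (k+1), (-1:ℤ)^(k+1-j) * ((d-j).choose (k+1-j)) * (n.choose j)
      = ∑ j ∈ Finset.range (k+1), ((-1:ℤ)^(k+1-j) * ((d+1-j).choose (k+1-j)) * (n.choose j)
          + (-1:ℤ)^(k-j) * ((d-j).choose (k-j)) * (n.choose j)) := by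
    refine Finset.sum_congr rfl fun j hj => ?_
    have hjk : j ≤ k := Nat.lt_succ_iff.mp (Finset.mem_range.mp hj)
    have h1 : d + 1 - j = (d - j) + 1 := by omega
    have h2 : k + 1 - j = (k - j) + 1 := by omega
    rw [h1, h2, Nat.choose_succ_succ]
    push_cast
    ring
  rw [key, Finset.sum_add_distrib]
  ring

private lemma Saux_main : ∀ m k d n, n = d + m → k ≤ d →
    Saux n d k = ((n - d + k - 1).choose k : ℤ) := by
  intro m
  induction m with
  | zero =>
    intro k d n hn hk
    have hd : d = n := by omega
    subst hd
    rw [Saux_base d k hk]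
    rcases Nat.eq_zero_or_pos k with h0 | h0
    · simp [h0]
    · have hz : d - d + k - 1 < k := by omega
      rw [Nat.choose_eq_zero_of_lt hz]
      simp [Nat.pos_iff_ne_zero.mp h0]
  | succ m ih =>
    intro k
    induction k with
    | zero =>
      intro d n hn hk
      simp [Saux]
    | succ k ihk =>
      intro d n hn hk
      rw [Saux_step n d k hk, ih (k+1) (d+1) n (by omega) (by omega),
        ihk d n hn (by omega)]
      have e1 : n - (d+1) + (k+1) - 1 = n - d + k - 1 := by omega
      have e2 : n - d + (k+1) - 1 = (n - d + k - 1) + 1 := by omega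
      rw [e1, e2, Nat.choose_succ_succ]
      push_cast
      ring

/-- For all natural numbers `n, d, k` with `k ≤ d ≤ n`,
`∑_{j=0}^{k} (-1)^{k-j} C(d-j, k-j) C(n, j) = C(n-d+k-1, k)`. -/
theorem stmt_0 (n d k : ℕ) (hkd : k ≤ d) (hdn : d ≤ n) :
    ∑ j ∈ Finset.range (k + 1),
      (-1 : ℤ) ^ (k - j) * ((d - j).choose (k - j)) * (n.choose j)
    = ((n - d + k - 1).choose k : ℤ) := by
  have := Saux_main (n - d) k d n (by omega) hkd
  simpa [Saux] using this
end

section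
/- For all natural numbers n and j with 0 ≤ j ≤ n, the identity C(n-j+1, j) = ∑_{ℓ=0}^{⌊j/2⌋} (-1)^ℓ · C(n-j+1, ℓ) · C(n-2ℓ, j-2ℓ) holds. -/
open Finset PowerSeries

lemma key (d j : ℕ) :
    (((d + 1).choose j : ℤ))
      = ∑ l ∈ Finset.range (j / 2 + 1),
          (-1 : ℤ) ^ l * ((d + 1).choose l) * ((d + (j - 2 * l)).choose (j - 2 * l)) := by
  have h2 : (1 - X : ℤ⟦X⟧) ^ (d + 1) * (invOneSubPow ℤ (d + 1)).val = 1 := by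
    rw [← invOneSubPow_inv_eq_one_sub_pow]; exact (invOneSubPow ℤ (d + 1)).inv_val
  have hser : ((1 + X : ℤ⟦X⟧) ^ (d + 1))
      = (1 - X ^ 2) ^ (d + 1) * (invOneSubPow ℤ (d + 1)).val := by
    have h1 : (1 - X ^ 2 : ℤ⟦X⟧) = (1 + X) * (1 - X) := by ring
    rw [h1, mul_pow, mul_assoc, h2, mul_one]
  have hL : (coeff j) ((1 + X : ℤ⟦X⟧) ^ (d + 1)) = ((d + 1).choose j : ℤ) := by
    rw [add_comm (1 : ℤ⟦X⟧) X, add_pow, map_sum]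
    have hterm : ∀ x ∈ Finset.range (d + 2),
        (coeff j) ((X : ℤ⟦X⟧) ^ x * (1 : ℤ⟦X⟧) ^ (d + 1 - x) * ((d + 1).choose x : ℤ⟦X⟧))
          = if j = x then (((d + 1).choose x : ℤ)) else 0 := by
      intro x _
      have : (X : ℤ⟦X⟧) ^ x * (1 : ℤ⟦X⟧) ^ (d + 1 - x) * ((d + 1).choose x : ℤ⟦X⟧)
          = C (((d + 1).choose x : ℤ)) * X ^ x := by
        rw [map_natCast C]; ring
      rw [this, coeff_C_mul_X_pow]
    rw [Finset.sum_congr rfl hterm, Finset.sum_ite_eq (Finset.range (d + 2)) j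
      (fun x => (((d + 1).choose x : ℤ)))]
    split_ifs with h
    · rfl
    · simp only [Finset.mem_range, not_lt] at h
      rw [Nat.choose_eq_zero_of_lt (by omega)]
      simp
  have hA : ∀ a : ℕ, (coeff a) ((1 - X ^ 2 : ℤ⟦X⟧) ^ (d + 1))
      = ∑ i ∈ Finset.range (d + 2),
          if a = 2 * i then (-1 : ℤ) ^ i * ((d + 1).choose i) else 0 := by
    intro a
    have h1 : (1 - X ^ 2 : ℤ⟦X⟧) = -X ^ 2 + 1 := by ring
    rw [h1, add_pow, map_sum]
    apply Finset.sum_congr rfl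
    intro i _
    have : (-X ^ 2 : ℤ⟦X⟧) ^ i * (1 : ℤ⟦X⟧) ^ (d + 1 - i) * ((d + 1).choose i : ℤ⟦X⟧)
        = C ((-1 : ℤ) ^ i * ((d + 1).choose i)) * X ^ (2 * i) := by
      rw [map_mul, map_pow, map_neg, map_one, map_natCast C, neg_pow, ← pow_mul]
      ring
    rw [this, coeff_C_mul_X_pow]
  have hB : ∀ b : ℕ, (coeff b) (invOneSubPow ℤ (d + 1)).val = ((d + b).choose d : ℤ) := by
    intro b
    rw [invOneSubPow_val_succ_eq_mk_add_choose, coeff_mk]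
  have key0 := congrArg (coeff j) hser
  rw [hL, coeff_mul] at key0
  rw [key0, Finset.Nat.sum_antidiagonal_eq_sum_range_succ (fun a b =>
    (coeff a) ((1 - X ^ 2 : ℤ⟦X⟧) ^ (d + 1)) * (coeff b) (invOneSubPow ℤ (d + 1)).val)]
  have step : ∑ a ∈ Finset.range (j + 1),
      (coeff a) ((1 - X ^ 2 : ℤ⟦X⟧) ^ (d + 1)) * (coeff (j - a)) (invOneSubPow ℤ (d + 1)).val
      = ∑ i ∈ Finset.range (d + 2), if 2 * i ≤ j then
          (-1 : ℤ) ^ i * ((d + 1).choose i) * ((d + (j - 2 * i)).choose d : ℤ) else 0 := by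
    have h3 : ∀ a ∈ Finset.range (j + 1),
        (coeff a) ((1 - X ^ 2 : ℤ⟦X⟧) ^ (d + 1)) * (coeff (j - a)) (invOneSubPow ℤ (d + 1)).val
        = ∑ i ∈ Finset.range (d + 2),
            if a = 2 * i then (-1 : ℤ) ^ i * ((d + 1).choose i) * ((d + (j - a)).choose d : ℤ)
            else 0 := by
      intro a _
      rw [hA a, hB, Finset.sum_mul]
      apply Finset.sum_congr rfl
      intro i _
      rw [ite_mul, zero_mul]
    rw [Finset.sum_congr rfl h3, Finset.sum_comm]
    apply Finset.sum_congr rfl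
    intro i _
    have h4 : ∀ a ∈ Finset.range (j + 1),
        (if a = 2 * i then (-1 : ℤ) ^ i * ((d + 1).choose i) * ((d + (j - a)).choose d : ℤ) else 0)
        = (if a = 2 * i then (-1 : ℤ) ^ i * ((d + 1).choose i) * ((d + (j - 2 * i)).choose d : ℤ)
           else 0) := by
      intro a _
      split_ifs with h
      · rw [h]
      · rfl
    rw [Finset.sum_congr rfl h4, Finset.sum_ite_eq' (Finset.range (j + 1)) (2 * i)
      (fun _ => (-1 : ℤ) ^ i * ((d + 1).choose i) * ((d + (j - 2 * i)).choose d : ℤ))]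
    simp only [Finset.mem_range, Nat.lt_succ_iff]
  rw [step]
  set f : ℕ → ℤ := fun l =>
    (-1 : ℤ) ^ l * ((d + 1).choose l) * ((d + (j - 2 * l)).choose (j - 2 * l)) with hf
  set N := max (d + 2) (j / 2 + 1) with hN
  have e1 : ∑ i ∈ Finset.range (d + 2), (if 2 * i ≤ j then
        (-1 : ℤ) ^ i * ((d + 1).choose i) * ((d + (j - 2 * i)).choose d : ℤ) else 0)
      = ∑ i ∈ Finset.range N, (if 2 * i ≤ j then f i else 0) := by
    have e1a : ∀ i ∈ Finset.range (d + 2),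
        (if 2 * i ≤ j then
          (-1 : ℤ) ^ i * ((d + 1).choose i) * ((d + (j - 2 * i)).choose d : ℤ) else 0)
        = (if 2 * i ≤ j then f i else 0) := by
      intro i _
      split_ifs with h
      · rw [hf]; simp only []
        rw [Nat.choose_symm_add]
      · rfl
    rw [Finset.sum_congr rfl e1a]
    apply Finset.sum_subset (Finset.range_subset_range.2 (le_max_left _ _))
    intro i _ hi
    simp only [Finset.mem_range, not_lt] at hi
    have hz : (d + 1).choose i = 0 := Nat.choose_eq_zero_of_lt (by omega)
    simp [hf, hz]
  have e2 : ∑ l ∈ Finset.range (j / 2 + 1), f l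
      = ∑ i ∈ Finset.range N, (if 2 * i ≤ j then f i else 0) := by
    have e2a : ∀ l ∈ Finset.range (j / 2 + 1), f l = (if 2 * l ≤ j then f l else 0) := by
      intro l hl
      simp only [Finset.mem_range, Nat.lt_succ_iff] at hl
      rw [if_pos (by omega : 2 * l ≤ j)]
    rw [Finset.sum_congr rfl e2a]
    apply Finset.sum_subset (Finset.range_subset_range.2 (le_max_right _ _))
    intro i _ hi
    simp only [Finset.mem_range, not_lt] at hi
    rw [if_neg (by omega)]
  rw [e1, ← e2]

/-- For all natural numbers `n, j` with `j ≤ n`,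
`C(n-j+1, j) = ∑_{ℓ=0}^{⌊j/2⌋} (-1)^ℓ C(n-j+1, ℓ) C(n-2ℓ, j-2ℓ)`. -/
theorem stmt_1 (n j : ℕ) (hj : j ≤ n) :
    ((n - j + 1).choose j : ℤ)
      = ∑ l ∈ Finset.range (j / 2 + 1),
          (-1 : ℤ) ^ l * ((n - j + 1).choose l) * ((n - 2 * l).choose (j - 2 * l)) := by
  rw [key (n - j) j]
  apply Finset.sum_congr rfl
  intro l hl
  simp only [Finset.mem_range, Nat.lt_succ_iff] at hl
  have h : n - j + (j - 2 * l) = n - 2 * l := by omega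
  rw [h]
end

section
/- Let n = 3k+2 with k ≥ 1, and let I_n be the path edge ideal in K[x_1,...,x_n]. With u = x_2x_5⋯x_{3k-1}, the colon ideal (I_n : u) equals (x_1, x_3, x_4, x_6, ..., x_{3k-2}, x_{3k}, x_{3k+1}x_{3k+2}), a complete intersection monomial ideal with 2k+1 minimal generators having pairwise disjoint supports. -/
open MvPolynomial

/-- Let `n = 3k+2` (`k ≥ 1`), `I_n` the edge ideal of the path graph `P_n` in
`K[x_1,…,x_n]` (variables indexed `0,…,n-1`), and `u = x_2 x_5 ⋯ x_{3k-1}` (indices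
`1, 4, …, 3k-2`). Then `(I_n : u)` equals the ideal generated by the variables `x_i`,
`1 ≤ i ≤ 3k`, `i ≢ 2 (mod 3)` (1-indexed), together with the monomial
`x_{3k+1} x_{3k+2}`: a complete intersection monomial ideal with `2k+1` minimal
generators having pairwise disjoint supports. -/
theorem stmt_11 (K : Type*) [Field K] (k n : ℕ) (hk : 1 ≤ k) (hn : n = 3 * k + 2)
    (I : Ideal (MvPolynomial (Fin n) K))
    (hI : I = Ideal.span
      {p | ∃ i j : Fin n, (j : ℕ) = (i : ℕ) + 1 ∧ p = X i * X j})
    (u : MvPolynomial (Fin n) K)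
    (hu : u = ∏ i ∈ Finset.univ.filter
        (fun i : Fin n => (i : ℕ) % 3 = 1 ∧ (i : ℕ) + 1 < n), X i) :
    I.colon (Ideal.span {u}) = Ideal.span
      ({p | ∃ i : Fin n, (i : ℕ) % 3 ≠ 1 ∧ (i : ℕ) < 3 * k ∧ p = X i} ∪
       {p | ∃ a b : Fin n, (a : ℕ) = 3 * k ∧ (b : ℕ) = 3 * k + 1 ∧ p = X a * X b}) := by
  classical
  set T : Finset (Fin n) :=
    Finset.univ.filter (fun i : Fin n => (i : ℕ) % 3 = 1 ∧ (i : ℕ) + 1 < n) with hT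
  set w : Fin n →₀ ℕ := ∑ i ∈ T, Finsupp.single i 1 with hwdef
  have hw : ∀ a : Fin n, w a = if ((a : ℕ) % 3 = 1 ∧ (a : ℕ) + 1 < n) then 1 else 0 := by
    intro a
    rw [hwdef, Finset.sum_apply']
    simp [Finsupp.single_apply, Finset.sum_ite_eq, hT]
  have key : ∀ S : Finset (Fin n),
      ∏ i ∈ S, X i = monomial (∑ i ∈ S, Finsupp.single i 1) (1 : K) := by
    intro S
    induction S using Finset.induction with
    | empty => simp
    | insert a s h ih =>
      rw [Finset.prod_insert h, Finset.sum_insert h, ih, X, monomial_mul, one_mul]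
  have hu' : u = monomial w (1 : K) := by rw [hu, hwdef]; exact key T
  -- monomial-image form of I
  set SI : Set (Fin n →₀ ℕ) :=
    {s | ∃ i j : Fin n, (j : ℕ) = (i : ℕ) + 1 ∧ s = Finsupp.single i 1 + Finsupp.single j 1}
    with hSI
  have hI' : I = Ideal.span ((fun s => monomial s (1 : K)) '' SI) := by
    rw [hI]; congr 1; ext p
    constructor
    · rintro ⟨i, j, hij, rfl⟩
      exact ⟨Finsupp.single i 1 + Finsupp.single j 1, ⟨i, j, hij, rfl⟩,
        by rw [X, X, monomial_mul, one_mul]⟩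
    · rintro ⟨s, ⟨i, j, hij, rfl⟩, rfl⟩
      exact ⟨i, j, hij, by rw [X, X, monomial_mul, one_mul]⟩
  -- monomial-image form of the RHS generating set
  set SJ : Set (Fin n →₀ ℕ) :=
    {s | ∃ i : Fin n, (i : ℕ) % 3 ≠ 1 ∧ (i : ℕ) < 3 * k ∧ s = Finsupp.single i 1} ∪
    {s | ∃ a b : Fin n, (a : ℕ) = 3 * k ∧ (b : ℕ) = 3 * k + 1 ∧
      s = Finsupp.single a 1 + Finsupp.single b 1} with hSJ
  have hJ' : ({p | ∃ i : Fin n, (i : ℕ) % 3 ≠ 1 ∧ (i : ℕ) < 3 * k ∧ p = X i} ∪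
       {p | ∃ a b : Fin n, (a : ℕ) = 3 * k ∧ (b : ℕ) = 3 * k + 1 ∧ p = X a * X b} :
       Set (MvPolynomial (Fin n) K)) = (fun s => monomial s (1 : K)) '' SJ := by
    ext p
    constructor
    · rintro (⟨i, h1, h2, rfl⟩ | ⟨a, b, h1, h2, rfl⟩)
      · exact ⟨Finsupp.single i 1, Or.inl ⟨i, h1, h2, rfl⟩, by rw [X]⟩
      · exact ⟨Finsupp.single a 1 + Finsupp.single b 1, Or.inr ⟨a, b, h1, h2, rfl⟩,
          by rw [X, X, monomial_mul, one_mul]⟩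
    · rintro ⟨s, (⟨i, h1, h2, rfl⟩ | ⟨a, b, h1, h2, rfl⟩), rfl⟩
      · exact Or.inl ⟨i, h1, h2, by rw [X]⟩
      · exact Or.inr ⟨a, b, h1, h2, by rw [X, X, monomial_mul, one_mul]⟩
  rw [hJ']
  apply le_antisymm
  · -- colon ⊆ J
    intro f hf
    rw [Ideal.mem_colon_span_singleton, hI', hu', mem_ideal_span_monomial_image] at hf
    rw [mem_ideal_span_monomial_image]
    intro d hd
    have hsup : d + w ∈ (f * monomial w (1 : K)).support := by
      rw [mem_support_iff, coeff_mul_monomial, mul_one]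
      exact mem_support_iff.mp hd
    obtain ⟨s, ⟨i, j, hij, rfl⟩, hle⟩ := hf _ hsup
    rw [Finsupp.le_def] at hle
    have hne : i ≠ j := by
      intro h; rw [h] at hij; omega
    have h1 : 1 ≤ d i + w i := by
      have := hle i
      simpa [Finsupp.single_apply, Finsupp.single_eq_of_ne hne] using this
    have h2 : 1 ≤ d j + w j := by
      have := hle j
      simpa [Finsupp.single_apply, Finsupp.single_eq_of_ne (Ne.symm hne)] using this
    have hjn : (j : ℕ) < n := j.isLt
    rw [hw] at h1 h2
    -- helper to conclude with a single-variable generator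
    have single_case : ∀ a : Fin n, (a : ℕ) % 3 ≠ 1 → (a : ℕ) < 3 * k → 1 ≤ d a →
        ∃ s ∈ SJ, s ≤ d := by
      intro a ha1 ha2 ha3
      refine ⟨Finsupp.single a 1, Or.inl ⟨a, ha1, ha2, rfl⟩, Finsupp.le_def.mpr fun x => ?_⟩
      rcases eq_or_ne a x with rfl | hax
      · simpa using ha3
      · simp [Finsupp.single_eq_of_ne (Ne.symm hax)]
    rcases (by omega : (i : ℕ) % 3 = 0 ∨ (i : ℕ) % 3 = 1 ∨ (i : ℕ) % 3 = 2) with h0 | h0 | h0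
    · -- i ≡ 0
      have hci : ¬ ((i : ℕ) % 3 = 1 ∧ (i : ℕ) + 1 < n) := by omega
      rw [if_neg hci] at h1
      have hdi : 1 ≤ d i := by omega
      by_cases hcase : (i : ℕ) < 3 * k
      · exact single_case i (by omega) hcase hdi
      · have hieq : (i : ℕ) = 3 * k := by omega
        have hjeq : (j : ℕ) = 3 * k + 1 := by omega
        have hcj : ¬ ((j : ℕ) % 3 = 1 ∧ (j : ℕ) + 1 < n) := by omega
        rw [if_neg hcj] at h2
        have hdj : 1 ≤ d j := by omega
        refine ⟨Finsupp.single i 1 + Finsupp.single j 1, Or.inr ⟨i, j, hieq, hjeq, rfl⟩,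
          Finsupp.le_def.mpr fun x => ?_⟩
        simp only [Finsupp.add_apply, Finsupp.single_apply]
        rcases eq_or_ne i x with rfl | hix
        · rw [if_pos rfl, if_neg (Ne.symm hne)]; omega
        · rcases eq_or_ne j x with rfl | hjx
          · rw [if_neg hix, if_pos rfl]; omega
          · rw [if_neg hix, if_neg hjx]; omega
    · -- i ≡ 1
      have hcj : ¬ ((j : ℕ) % 3 = 1 ∧ (j : ℕ) + 1 < n) := by omega
      rw [if_neg hcj] at h2
      have hdj : 1 ≤ d j := by omega
      exact single_case j (by omega) (by omega) hdj
    · -- i ≡ 2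
      have hci : ¬ ((i : ℕ) % 3 = 1 ∧ (i : ℕ) + 1 < n) := by omega
      rw [if_neg hci] at h1
      have hdi : 1 ≤ d i := by omega
      exact single_case i (by omega) (by omega) hdi
  · -- J ⊆ colon
    rw [Ideal.span_le]
    rintro p ⟨s, hs, rfl⟩
    rw [SetLike.mem_coe, Ideal.mem_colon_span_singleton, hI', hu', monomial_mul, mul_one,
      mem_ideal_span_monomial_image]
    intro xi hxi
    rw [support_monomial, if_neg (one_ne_zero)] at hxi
    rw [Finset.mem_singleton] at hxi
    subst hxi
    rcases hs with ⟨i, h1, h2, rfl⟩ | ⟨a, b, h1, h2, rfl⟩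
    · rcases (by omega : (i : ℕ) % 3 = 0 ∨ (i : ℕ) % 3 = 1 ∨ (i : ℕ) % 3 = 2) with h0 | h0 | h0
      · -- use edge (i, i+1)
        have hi3 : (i : ℕ) + 1 < n := by omega
        set j : Fin n := ⟨(i : ℕ) + 1, hi3⟩ with hjd
        refine ⟨Finsupp.single i 1 + Finsupp.single j 1, ⟨i, j, rfl, rfl⟩,
          Finsupp.le_def.mpr fun x => ?_⟩
        have hwj : w j = 1 := by
          rw [hw]; rw [if_pos]; constructor <;> simp [hjd] <;> omega
        simp only [Finsupp.add_apply, Finsupp.single_apply]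
        rcases eq_or_ne i x with rfl | hix
        · rcases eq_or_ne j i with h | hji
          · exfalso; rw [Fin.ext_iff] at h; simp [hjd] at h
          · simp [hji, Finsupp.single_eq_same]
        · rcases eq_or_ne j x with rfl | hjx
          · simp [hix, hwj]
          · simp [hix, hjx]
      · exact absurd h0 h1
      · -- use edge (i-1, i)
        have hi2 : 2 ≤ (i : ℕ) := by omega
        set a : Fin n := ⟨(i : ℕ) - 1, by omega⟩ with had
        refine ⟨Finsupp.single a 1 + Finsupp.single i 1, ⟨a, i, by simp [had]; omega, rfl⟩,
          Finsupp.le_def.mpr fun x => ?_⟩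
        have hwa : w a = 1 := by
          rw [hw]; rw [if_pos]; constructor <;> simp [had] <;> omega
        have hai : a ≠ i := by
          simp only [ne_eq, Fin.ext_iff, had]; omega
        simp only [Finsupp.add_apply, Finsupp.single_apply]
        rcases eq_or_ne a x with rfl | hax
        · rw [if_pos rfl, if_neg (Ne.symm hai), hwa]; omega
        · rcases eq_or_ne i x with rfl | hix
          · rw [if_neg hai, if_pos rfl]; omega
          · rw [if_neg hax, if_neg hix]; omega
    · -- pair generator: the edge (a,b) itself
      refine ⟨Finsupp.single a 1 + Finsupp.single b 1, ⟨a, b, by omega, rfl⟩,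
        le_add_of_nonneg_right zero_le⟩
end

section
/- For all 2 ≤ k ≤ d ≤ n, the quantity β_k^d(I_n) := C(n-d+k-1, k) - ∑_{j=0}^{k} (-1)^{k-j} C(d-j, k-j) C(n-j+1, j) satisfies β_k^d(I_n) = ∑_{ℓ=1}^{⌊k/2⌋} (-1)^{ℓ-1} ∑_{j=0}^{k} (-1)^{k-j} C(d-j, k-j) C(n-j+1, ℓ) C(n-2ℓ, j-2ℓ). -/
open PowerSeries Finset

lemma coeff_one_add_X_pow (a j : ℕ) :
    PowerSeries.coeff (R := ℤ) j ((1 + X) ^ a) = a.choose j := by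
  rw [add_comm (1 : ℤ⟦X⟧) X, add_pow]
  simp only [one_pow, mul_one, map_sum]
  rw [Finset.sum_eq_single j]
  · rw [mul_comm, PowerSeries.coeff_mul_X_pow']
    simp
  · intro b hb hbj
    rw [mul_comm, PowerSeries.coeff_mul_X_pow']
    rcases le_or_gt b j with h | h
    · simp only [if_pos h]
      rw [← map_natCast (PowerSeries.C (R := ℤ)), PowerSeries.coeff_C, if_neg (by omega)]
    · rw [if_neg (by omega)]
  · intro h
    rw [Nat.choose_eq_zero_of_lt (by simpa using h)]
    simp

lemma lemA (n b k : ℕ) (h : b + 1 ≤ n) :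
    ∑ j ∈ range (k + 1),
      (-1 : ℤ) ^ (k - j) * ((b + (k - j)).choose (k - j)) * (n.choose j)
    = ((n - b - 1).choose k : ℤ) := by
  set h₀ : ℤ⟦X⟧ := rescale (-1) ((invOneSubPow ℤ (b + 1)).val) with hh
  have e1 : rescale (-1 : ℤ) (1 - X) = 1 + X := by
    rw [map_sub, map_one, rescale_neg_one_X]; ring
  have e2 : (1 + X) ^ (b + 1) * h₀ = 1 := by
    have hv : ((1 - X : ℤ⟦X⟧) ^ (b + 1)) * (invOneSubPow ℤ (b + 1)).val = 1 := by
      rw [← invOneSubPow_inv_eq_one_sub_pow]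
      exact (invOneSubPow ℤ (b + 1)).inv_val
    calc (1 + X) ^ (b + 1) * h₀
        = rescale (-1 : ℤ) (((1 - X) ^ (b + 1)) * (invOneSubPow ℤ (b + 1)).val) := by
          rw [map_mul, map_pow, e1]
      _ = 1 := by rw [hv, map_one]
  have e3 : (1 + X : ℤ⟦X⟧) ^ n * h₀ = (1 + X) ^ (n - (b + 1)) := by
    have : n = (n - (b + 1)) + (b + 1) := by omega
    rw [this, pow_add, mul_assoc, e2, mul_one]
    congr 1; omega
  have e4 := congrArg (PowerSeries.coeff (R := ℤ) k) e3
  rw [coeff_one_add_X_pow, PowerSeries.coeff_mul,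
    Finset.Nat.sum_antidiagonal_eq_sum_range_succ
      (fun p q => (PowerSeries.coeff (R := ℤ) p ((1 + X) ^ n)) * (PowerSeries.coeff (R := ℤ) q h₀))] at e4
  have e5 : ∀ q : ℕ, PowerSeries.coeff (R := ℤ) q h₀ = (-1 : ℤ) ^ q * ((b + q).choose q) := by
    intro q
    rw [hh, coeff_rescale, invOneSubPow_val_succ_eq_mk_add_choose, coeff_mk]
    rw [Nat.choose_symm_add]
  rw [show n - b - 1 = n - (b + 1) from by omega, ← e4]
  apply Finset.sum_congr rfl
  intro j hj
  rw [coeff_one_add_X_pow, e5]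
  ring

-- per-j expansion
lemma lemB (n j M : ℕ) (hj : j ≤ n) (hM : j / 2 ≤ M) :
    ((n - j + 1).choose j : ℤ)
      = ∑ l ∈ range (M + 1), (-1 : ℤ) ^ l * ((n - j + 1).choose l) *
          (if 2 * l ≤ j then ((n - 2 * l).choose (j - 2 * l) : ℤ) else 0) := by
  set a := n - j with ha
  set g : ℤ⟦X⟧ := (invOneSubPow ℤ (a + 1)).val with hg
  have hv : ((1 - X : ℤ⟦X⟧) ^ (a + 1)) * g = 1 := by
    rw [hg, ← invOneSubPow_inv_eq_one_sub_pow]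
    exact (invOneSubPow ℤ (a + 1)).inv_val
  have E : ((1 : ℤ⟦X⟧) - X ^ 2) ^ (a + 1) * g = (1 + X) ^ (a + 1) := by
    rw [show ((1 : ℤ⟦X⟧) - X ^ 2) = (1 + X) * (1 - X) from by ring, mul_pow, mul_assoc, hv,
      mul_one]
  have expand : ((1 : ℤ⟦X⟧) - X ^ 2) ^ (a + 1)
      = ∑ l ∈ range (a + 2), PowerSeries.C (R := ℤ) ((-1) ^ l * ((a + 1).choose l)) * X ^ (2 * l) := by
    rw [sub_eq_add_neg, add_comm, add_pow]
    apply Finset.sum_congr rfl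
    intro l _
    rw [neg_pow, one_pow, mul_one, ← pow_mul, map_mul, map_pow, map_neg, map_one,
      map_natCast]
    ring
  have key := congrArg (PowerSeries.coeff (R := ℤ) j) E
  rw [expand, Finset.sum_mul, map_sum, coeff_one_add_X_pow] at key
  have hcoeff : ∀ l, PowerSeries.coeff (R := ℤ) j (PowerSeries.C (R := ℤ) ((-1) ^ l * ((a + 1).choose l))
      * X ^ (2 * l) * g)
      = (-1 : ℤ) ^ l * ((n - j + 1).choose l) *
          (if 2 * l ≤ j then ((n - 2 * l).choose (j - 2 * l) : ℤ) else 0) := by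
    intro l
    rw [mul_assoc, PowerSeries.coeff_C_mul, PowerSeries.coeff_X_pow_mul']
    have hnj : n - j + 1 = a + 1 := by omega
    rw [hnj]
    rcases le_or_gt (2 * l) j with h | h
    · rw [if_pos h, if_pos h, hg, invOneSubPow_val_succ_eq_mk_add_choose, coeff_mk]
      rw [show a + (j - 2 * l) = n - 2 * l from by omega,
        show a = (n - 2 * l) - (j - 2 * l) from by omega, Nat.choose_symm (by omega)]
    · simp only [if_neg (show ¬ 2 * l ≤ j by omega)]
  simp only [hcoeff] at key
  rw [show (n - j + 1).choose j = (a + 1).choose j from by rw [show n - j + 1 = a + 1 from by omega],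
    ← key]
  set f : ℕ → ℤ := fun l => (-1 : ℤ) ^ l * ((n - j + 1).choose l) *
      (if 2 * l ≤ j then ((n - 2 * l).choose (j - 2 * l) : ℤ) else 0) with hf
  have big : ∀ N, a + 1 ≤ N → M ≤ N → ∑ l ∈ range (N + 1), f l = ∑ l ∈ range (a + 2), f l := by
    intro N h1 h2
    symm
    apply Finset.sum_subset (by intro x hx; simp at hx ⊢; omega)
    intro x _ hx
    simp only [Finset.mem_range, not_lt] at hx
    rw [hf]
    simp only
    rw [show (n - j + 1) = a + 1 from by omega, Nat.choose_eq_zero_of_lt (by omega)]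
    simp
  have big2 : ∀ N, M ≤ N → ∑ l ∈ range (N + 1), f l = ∑ l ∈ range (M + 1), f l := by
    intro N h2
    symm
    apply Finset.sum_subset (by intro x hx; simp at hx ⊢; omega)
    intro x _ hx
    simp only [Finset.mem_range, not_lt] at hx
    rw [hf]
    simp only
    rw [if_neg (by omega)]
    simp
  have := (big (max (a + 1) M) (le_max_left _ _) (le_max_right _ _)).symm.trans
    (big2 (max (a + 1) M) (le_max_right _ _))
  exact this

lemma lemB' (n j k : ℕ) (hj : j ≤ k) (hk : k ≤ n) :
    ∑ l ∈ Finset.Icc 1 (k / 2), (-1 : ℤ) ^ (l - 1) * ((n - j + 1).choose l) *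
        (if 2 * l ≤ j then ((n - 2 * l).choose (j - 2 * l) : ℤ) else 0)
      = (n.choose j : ℤ) - ((n - j + 1).choose j : ℤ) := by
  have hB := lemB n j (k / 2) (le_trans hj hk) (Nat.div_le_div_right hj)
  rw [Finset.sum_range_succ'] at hB
  rw [show Finset.Icc 1 (k / 2) = Finset.Ico 1 (k / 2 + 1) from by rw [Finset.Ico_add_one_right_eq_Icc],
    Finset.sum_Ico_eq_sum_range]
  simp only [Nat.add_sub_cancel] at *
  have e : ∀ x : ℕ, (-1 : ℤ) ^ (1 + x - 1) * ((n - j + 1).choose (1 + x)) *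
        (if 2 * (1 + x) ≤ j then ((n - 2 * (1 + x)).choose (j - 2 * (1 + x)) : ℤ) else 0)
      = -((-1 : ℤ) ^ (x + 1) * ((n - j + 1).choose (x + 1)) *
        (if 2 * (x + 1) ≤ j then ((n - 2 * (x + 1)).choose (j - 2 * (x + 1)) : ℤ) else 0)) := by
    intro x
    rw [show 1 + x - 1 = x from by omega, show 1 + x = x + 1 from by omega, pow_succ]
    ring
  rw [Finset.sum_congr rfl (fun x _ => e x), Finset.sum_neg_distrib]
  have h0 : ((-1 : ℤ) ^ 0 * ((n - j + 1).choose 0) *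
      (if 2 * 0 ≤ j then ((n - 2 * 0).choose (j - 2 * 0) : ℤ) else 0)) = (n.choose j : ℤ) := by
    norm_num
  rw [h0] at hB
  linarith [hB]

/-- For all `2 ≤ k ≤ d ≤ n`,
`β_k^d(I_n) = C(n-d+k-1, k) - ∑_{j=0}^{k} (-1)^{k-j} C(d-j, k-j) C(n-j+1, j)` satisfies
`β_k^d(I_n) = ∑_{ℓ=1}^{⌊k/2⌋} (-1)^{ℓ-1} ∑_{j=0}^{k} (-1)^{k-j} C(d-j, k-j) C(n-j+1, ℓ) C(n-2ℓ, j-2ℓ)`,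
where `C(n-2ℓ, j-2ℓ) = 0` when `j < 2ℓ`. -/
theorem stmt_18 (n d k : ℕ) (h2 : 2 ≤ k) (hkd : k ≤ d) (hdn : d ≤ n) :
    ((n - d + k - 1).choose k : ℤ)
      - ∑ j ∈ Finset.range (k + 1),
          (-1 : ℤ) ^ (k - j) * ((d - j).choose (k - j)) * ((n - j + 1).choose j)
    = ∑ l ∈ Finset.Icc 1 (k / 2), (-1 : ℤ) ^ (l - 1) *
        ∑ j ∈ Finset.range (k + 1),
          (-1 : ℤ) ^ (k - j) * ((d - j).choose (k - j)) * ((n - j + 1).choose l) *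
            (if 2 * l ≤ j then ((n - 2 * l).choose (j - 2 * l) : ℤ) else 0) := by
  have hswap : (∑ l ∈ Finset.Icc 1 (k / 2), (-1 : ℤ) ^ (l - 1) *
        ∑ j ∈ Finset.range (k + 1),
          (-1 : ℤ) ^ (k - j) * ((d - j).choose (k - j)) * ((n - j + 1).choose l) *
            (if 2 * l ≤ j then ((n - 2 * l).choose (j - 2 * l) : ℤ) else 0))
      = ∑ j ∈ Finset.range (k + 1),
          (-1 : ℤ) ^ (k - j) * ((d - j).choose (k - j)) *
            ((n.choose j : ℤ) - ((n - j + 1).choose j : ℤ)) := by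
    simp only [Finset.mul_sum]
    rw [Finset.sum_comm]
    apply Finset.sum_congr rfl
    intro j hj
    rw [← lemB' n j k (by simp at hj; omega) (le_trans hkd hdn), Finset.mul_sum]
    apply Finset.sum_congr rfl
    intro l _
    ring
  rw [hswap]
  have hsplit : (∑ j ∈ Finset.range (k + 1),
          (-1 : ℤ) ^ (k - j) * ((d - j).choose (k - j)) *
            ((n.choose j : ℤ) - ((n - j + 1).choose j : ℤ)))
      = (∑ j ∈ Finset.range (k + 1),
          (-1 : ℤ) ^ (k - j) * ((d - j).choose (k - j)) * (n.choose j : ℤ))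
        - ∑ j ∈ Finset.range (k + 1),
          (-1 : ℤ) ^ (k - j) * ((d - j).choose (k - j)) * ((n - j + 1).choose j : ℤ) := by
    rw [← Finset.sum_sub_distrib]
    apply Finset.sum_congr rfl
    intro j _
    ring
  rw [hsplit]
  have hA := lemA n (d - k) k (by omega)
  have : (∑ j ∈ Finset.range (k + 1),
      (-1 : ℤ) ^ (k - j) * ((d - j).choose (k - j)) * (n.choose j : ℤ))
      = ((n - d + k - 1).choose k : ℤ) := by
    rw [show n - d + k - 1 = n - (d - k) - 1 from by omega, ← hA]
    apply Finset.sum_congr rfl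
    intro j hj
    simp only [Finset.mem_range] at hj
    rw [show d - k + (k - j) = d - j from by omega]
  rw [this]
end
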